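/- If the gradient of f with respect to the z-coordinates vanishes everywhere on an open convex domain X, then for any two points x_1, x_2 in X with W_1^T x_1 = W_1^T x_2, the full gradients agree: ∇_x f(x_1) = ∇_x f(x_2). -/
import Mathlib


open Matrix

/-- If `f` is continuously differentiable and `z`-invariant on an open convex domain `X`,
then the full gradients of `f` agree at any two points of `X` with the same
`y = W₁ᵀx` coordinates. -/
theorem zInvariant_gradient_eq_on_fiber
    {m : ℕ} (n : ℕ) (X : Set (Fin m → ℝ)) (hXopen : IsOpen X) (hX : Convex ℝ X)
    (f : (Fin m → ℝ) → ℝ) (df : (Fin m → ℝ) → ((Fin m → ℝ) →L[ℝ] ℝ))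
    (hdf : ∀ x ∈ X, HasFDerivAt f (df x) x)
    (hcont : ContinuousOn df X)
    (W : Matrix (Fin m) (Fin m) ℝ) (hW : Wᵀ * W = 1)
    (hzinv : ∀ x ∈ X, ∀ i : Fin m, n ≤ (i : ℕ) → df x (fun j => W j i) = 0)
    (x₁ x₂ : Fin m → ℝ) (hx₁ : x₁ ∈ X) (hx₂ : x₂ ∈ X)
    (hy : ∀ i : Fin m, (i : ℕ) < n → ∑ j : Fin m, W j i * x₁ j = ∑ j : Fin m, W j i * x₂ j) :
    df x₁ = df x₂ := by
  have hW' : W * Wᵀ = 1 := mul_eq_one_comm.mp hW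
  set d : Fin m → ℝ := x₂ - x₁ with hd
  -- decomposition of any vector into columns of W
  have hdecomp : ∀ v : Fin m → ℝ,
      (∑ i : Fin m, (∑ k : Fin m, W k i * v k) • (fun j => W j i)) = v := by
    intro v
    funext j
    have hE : ∀ k, ∑ c : Fin m, W j c * W k c = if j = k then 1 else 0 := by
      intro k
      have := congrFun (congrFun hW' j) k
      simpa [Matrix.mul_apply, Matrix.one_apply, transpose_apply] using this
    rw [Finset.sum_apply]
    simp only [Pi.smul_apply, smul_eq_mul]
    calc ∑ c : Fin m, (∑ k : Fin m, W k c * v k) * W j c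
        = ∑ k : Fin m, (∑ c : Fin m, W j c * W k c) * v k := by
          simp only [Finset.sum_mul]
          rw [Finset.sum_comm]
          exact Finset.sum_congr rfl fun k _ => Finset.sum_congr rfl fun c _ => by ring
      _ = v j := by simp [hE, ite_mul]
  -- the derivative in the direction d vanishes on X
  have hdfd : ∀ x ∈ X, df x d = 0 := by
    intro x hx
    conv_lhs => rw [← hdecomp d]
    rw [map_sum]
    apply Finset.sum_eq_zero
    intro i _
    rw [ContinuousLinearMap.map_smul]
    by_cases h : (i : ℕ) < n
    · have hc : ∑ k : Fin m, W k i * d k = 0 := by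
        simp only [hd, Pi.sub_apply, mul_sub, Finset.sum_sub_distrib]
        rw [hy i h]; ring
      rw [hc]; simp
    · rw [hzinv x hx i (le_of_not_gt h)]; simp
  -- thickening of the segment
  have hseg : segment ℝ x₁ x₂ ⊆ X := hX.segment_subset hx₁ hx₂
  have hsegc : IsCompact (segment ℝ x₁ x₂) := by
    rw [segment_eq_image' ℝ x₁ x₂]
    exact (isCompact_Icc.image (by continuity))
  obtain ⟨ε, hε, hthick⟩ := hsegc.exists_thickening_subset_open hXopen hseg
  -- main direction-wise claim
  have key : ∀ v : Fin m → ℝ, df x₁ v = df x₂ v := by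
    intro v
    set δ : ℝ := ε / (‖v‖ + 1) with hδ
    have hδpos : 0 < δ := div_pos hε (by positivity)
    -- points are inside X
    have hmem : ∀ s : ℝ, |s| < δ → ∀ t ∈ Set.Icc (0:ℝ) 1, x₁ + t • d + s • v ∈ X := by
      intro s hs t ht
      apply hthick
      rw [Metric.mem_thickening_iff]
      refine ⟨x₁ + t • d, ?_, ?_⟩
      · rw [segment_eq_image' ℝ x₁ x₂]
        exact ⟨t, ht, rfl⟩
      · have : dist (x₁ + t • d + s • v) (x₁ + t • d) = ‖s • v‖ := by
          rw [dist_eq_norm]; congr 1; abel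
        rw [this, norm_smul]
        calc ‖s‖ * ‖v‖ ≤ |s| * (‖v‖ + 1) := by
              rw [Real.norm_eq_abs]
              exact mul_le_mul_of_nonneg_left (by linarith [norm_nonneg v]) (abs_nonneg s)
          _ < δ * (‖v‖ + 1) := by
              exact mul_lt_mul_of_pos_right hs (by positivity)
          _ = ε := by
              rw [hδ]; field_simp
    -- f (x₁ + s v) = f (x₂ + s v) for small s
    have hequal : ∀ s : ℝ, |s| < δ → f (x₁ + s • v) = f (x₂ + s • v) := by
      intro s hs
      have hψ : ∀ t ∈ Set.Icc (0:ℝ) 1,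
          HasDerivWithinAt (fun t : ℝ => f (x₁ + t • d + s • v)) 0 (Set.Icc 0 1) t := by
        intro t ht
        have hp : x₁ + t • d + s • v ∈ X := hmem s hs t ht
        have hc : HasDerivAt (fun t : ℝ => x₁ + t • d + s • v) d t := by
          have h := (((hasDerivAt_id t).smul_const d).add_const (s • v)).const_add x₁
          simpa [add_assoc] using h
        have h2 := (hdf _ hp).comp_hasDerivAt t hc
        rw [hdfd _ hp] at h2
        have h3 : HasDerivAt (fun t : ℝ => f (x₁ + t • d + s • v)) 0 t := h2
        exact h3.hasDerivWithinAt
      have := Convex.norm_image_sub_le_of_norm_hasDerivWithin_le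
        (C := 0) (f' := fun _ => (0:ℝ)) hψ (fun x _ => by simp) (convex_Icc 0 1)
        (Set.left_mem_Icc.2 zero_le_one) (Set.right_mem_Icc.2 zero_le_one)
      simp only [mul_zero, zero_mul, norm_le_zero_iff, sub_eq_zero] at this
      have h0 : x₁ + (0:ℝ) • d + s • v = x₁ + s • v := by simp
      have h1 : x₁ + (1:ℝ) • d + s • v = x₂ + s • v := by
        simp [hd]
      rw [h0, h1] at this
      exact this.symm
    -- derivatives at s = 0
    have hg : ∀ x ∈ X, HasDerivAt (fun s : ℝ => f (x + s • v)) (df x v) 0 := by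
      intro x hx
      have hc : HasDerivAt (fun s : ℝ => x + s • v) v 0 := by
        have := ((hasDerivAt_id (0:ℝ)).smul_const v).const_add x
        simpa using this
      have hx0 : x + (0:ℝ) • v = x := by simp
      have hfd : HasFDerivAt f (df x) (x + (0:ℝ) • v) := by rw [hx0]; exact hdf x hx
      have h2 := hfd.comp_hasDerivAt 0 hc
      exact h2
    have h1 := hg x₁ hx₁
    have h2 := hg x₂ hx₂
    have heq : (fun s : ℝ => f (x₁ + s • v)) =ᶠ[nhds 0] (fun s : ℝ => f (x₂ + s • v)) := by
      filter_upwards [Metric.ball_mem_nhds (0:ℝ) hδpos] with s hs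
      exact hequal s (by simpa [Real.dist_eq] using hs)
    exact (h1.congr_of_eventuallyEq heq.symm).unique h2
  exact ContinuousLinearMap.ext key
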